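/- arXiv:2602.14058 — 6 statements merged into one kernel-verified Lean document; each statement's English description precedes it below -/
import Mathlib

section
/- Let G = [[H, g],[g^T, -α]] with H symmetric, g ∈ ℝ^n, g ≠ 0, and α > 0, and let -δ be the smallest eigenvalue of G. Then δ > α (strict inequality). -/
open Matrix

/-- If `-δ` is the smallest eigenvalue of `G = [[H, g],[gᵀ, -α]]`
with `g ≠ 0` and `α > 0`, then `δ > α` strictly. -/
theorem hsda_delta_gt_alpha
    {n : ℕ} (H : Matrix (Fin n) (Fin n) ℝ) (hHsymm : H.IsSymm)
    (g : Fin n → ℝ) (hg : g ≠ 0) (α δ : ℝ) (hα : 0 < α)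
    (G : Matrix (Fin n ⊕ Unit) (Fin n ⊕ Unit) ℝ)
    (hG : G = Matrix.of fun i j =>
      match i, j with
      | Sum.inl i, Sum.inl j => H i j
      | Sum.inl i, Sum.inr _ => g i
      | Sum.inr _, Sum.inl j => g j
      | Sum.inr _, Sum.inr _ => -α)
    (heig : ∃ z : Fin n ⊕ Unit → ℝ, z ⬝ᵥ z = 1 ∧ G.mulVec z = (-δ) • z)
    (hmin : ∀ x : Fin n ⊕ Unit → ℝ, -δ * (x ⬝ᵥ x) ≤ x ⬝ᵥ G.mulVec x) :
    α < δ := by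
  -- Key: instantiate the min-eigenvalue inequality at vectors of the form (u, s)
  have key : ∀ (u : Fin n → ℝ) (s : ℝ),
      -δ * (u ⬝ᵥ u + s*s) ≤ u ⬝ᵥ H.mulVec u + 2*s*(g ⬝ᵥ u) - α*(s*s) := by
    intro u s
    have h := hmin (Sum.elim u (fun _ => s))
    simp [hG, dotProduct, mulVec, Fintype.sum_sum_type, Finset.sum_add_distrib,
      Finset.mul_sum, Finset.sum_mul, mul_add, add_mul] at h ⊢
    ring_nf at h ⊢
    have eq1 : ∑ x, δ * u x ^ 2 = ∑ x, δ * u x * u x :=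
      Finset.sum_congr rfl fun i _ => by ring
    have eq2 : ∑ x, s * g x * u x + ∑ x, s * u x * g x = ∑ x, s * g x * u x * 2 := by
      rw [← Finset.sum_add_distrib]
      exact Finset.sum_congr rfl fun i _ => by ring
    linarith [h, eq1, eq2]
  -- Step 1: α ≤ δ
  have h1 : α ≤ δ := by
    have h := key 0 1
    simp at h
    linarith
  by_contra hlt
  push_neg at hlt
  have hδ : δ = α := le_antisymm hlt h1
  subst hδ
  -- eigenvector components
  obtain ⟨z, hz1, hz2⟩ := heig
  set v : Fin n → ℝ := fun i => z (Sum.inl i) with hv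
  set w : ℝ := z (Sum.inr ()) with hw
  -- row equations
  have hinr := congrFun hz2 (Sum.inr ())
  simp [hG, mulVec, dotProduct, Fintype.sum_sum_type] at hinr
  have hgv : g ⬝ᵥ v = 0 := by
    simp [dotProduct]
    linarith [hinr]
  have hHv : H.mulVec v = fun i => -δ * v i - w * g i := by
    funext i
    have h := congrFun hz2 (Sum.inl i)
    simp [hG, mulVec, dotProduct, Fintype.sum_sum_type] at h
    simp [mulVec, dotProduct]
    linarith [h]
  -- symmetric bilinear form
  have hsym : ∀ a b : Fin n → ℝ, a ⬝ᵥ H.mulVec b = b ⬝ᵥ H.mulVec a := by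
    intro a b
    conv_lhs => rw [Matrix.dotProduct_mulVec, ← hHsymm, Matrix.vecMul_transpose]
    exact dotProduct_comm _ _
  have expand : ∀ a : Fin n → ℝ, a ⬝ᵥ H.mulVec v = -δ*(a ⬝ᵥ v) - w*(a ⬝ᵥ g) := by
    intro a
    rw [hHv]
    simp only [dotProduct, Finset.mul_sum, ← Finset.sum_sub_distrib]
    exact Finset.sum_congr rfl fun i _ => by ring
  have hvg : v ⬝ᵥ g = 0 := by rw [dotProduct_comm]; exact hgv
  have hGgg : 0 < g ⬝ᵥ g := by
    rcases (dotProduct_self_eq_zero (v := g)).not.mpr hg with h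
    have h2 : 0 ≤ g ⬝ᵥ g := Finset.sum_nonneg fun i _ => mul_self_nonneg _
    cases lt_or_eq_of_le h2 with
    | inl h3 => exact h3
    | inr h3 => exact absurd h3.symm h
  set s : ℝ := w - (1 + g ⬝ᵥ H.mulVec g + δ*(g ⬝ᵥ g))/(2*(g ⬝ᵥ g)) with hs
  have h := key (v + g) s
  have e1 : (v + g) ⬝ᵥ H.mulVec (v + g)
      = -δ*(v ⬝ᵥ v) - 2*w*(g ⬝ᵥ g) + g ⬝ᵥ H.mulVec g := by
    rw [Matrix.mulVec_add, dotProduct_add, add_dotProduct,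
      add_dotProduct]
    have e11 := expand v
    have e12 := expand g
    have e13 : v ⬝ᵥ H.mulVec g = g ⬝ᵥ H.mulVec v := hsym v g
    rw [e13, e12] at *
    rw [e11, e12, hgv, hvg]
    ring
  have e2 : g ⬝ᵥ (v + g) = g ⬝ᵥ g := by rw [dotProduct_add, hgv]; ring
  have e3 : (v + g) ⬝ᵥ (v + g) = v ⬝ᵥ v + g ⬝ᵥ g := by
    rw [dotProduct_add, add_dotProduct, add_dotProduct, hgv, hvg]
    ring
  rw [e1, e2, e3] at h
  have hsval : 2*s*(g ⬝ᵥ g) = 2*w*(g ⬝ᵥ g) - (1 + g ⬝ᵥ H.mulVec g + δ*(g ⬝ᵥ g)) := by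
    rw [hs]
    field_simp
  nlinarith [h, hsval, hGgg]
end

section
/- Let g ∈ ℝ^n be nonzero, H symmetric with H ⪯ L₁·I (L₁ > 0), α > 0, and Λ ∈ (0, √2/2]. Suppose δ > α satisfies both δ - α ≤ Λ‖g‖ and (δ-α)² + ((g^T H g)/‖g‖² + α)(δ-α) - ‖g‖² ≥ 0. Then ‖g‖ ≤ 2(L₁ + α)Λ. -/
open Matrix

/-- Bound on the gradient norm: if `H ⪯ L₁·I`, `0 < Λ ≤ √2/2`,
`δ > α`, `δ - α ≤ Λ‖g‖` and the quadratic inequality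
`(δ-α)² + (gᵀHg/‖g‖² + α)(δ-α) - ‖g‖² ≥ 0` holds, then `‖g‖ ≤ 2(L₁+α)Λ`. -/
theorem hsda_gradient_norm_bound
    {n : ℕ} (H : Matrix (Fin n) (Fin n) ℝ) (hHsymm : H.IsSymm)
    (g : Fin n → ℝ) (hg : g ≠ 0) (L₁ α δ Λ : ℝ) (hL : 0 < L₁)
    (hHle : ∀ x : Fin n → ℝ, x ⬝ᵥ H.mulVec x ≤ L₁ * (x ⬝ᵥ x))
    (hα : 0 < α) (hΛ : 0 < Λ) (hΛ2 : Λ ≤ Real.sqrt 2 / 2) (hδ : α < δ)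
    (h1 : δ - α ≤ Λ * Real.sqrt (g ⬝ᵥ g))
    (h2 : (δ - α) ^ 2 + ((g ⬝ᵥ H.mulVec g) / (g ⬝ᵥ g) + α) * (δ - α) - g ⬝ᵥ g ≥ 0) :
    Real.sqrt (g ⬝ᵥ g) ≤ 2 * (L₁ + α) * Λ := by
  set G : ℝ := g ⬝ᵥ g with hGdef
  have hGnn : 0 ≤ G := by
    simp only [hGdef, dotProduct]
    exact Finset.sum_nonneg fun i _ => mul_self_nonneg _
  have hG : 0 < G := by
    rcases hGnn.lt_or_eq with h | h
    · exact h
    · exact absurd ((dotProduct_self_eq_zero).mp h.symm) hg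
  set s : ℝ := Real.sqrt G with hsdef
  have hs : 0 < s := Real.sqrt_pos.mpr hG
  have hs2 : s ^ 2 = G := Real.sq_sqrt hGnn
  set c : ℝ := (g ⬝ᵥ H.mulVec g) / G + α with hcdef
  have hc : c ≤ L₁ + α := by
    have := hHle g
    have h' : (g ⬝ᵥ H.mulVec g) / G ≤ L₁ := by
      rw [div_le_iff₀ hG]
      linarith [this]
    simpa [hcdef] using add_le_add_right h' α
  set m : ℝ := δ - α with hmdef
  have hm : 0 < m := by simp [hmdef]; linarith
  clear_value G s c m
  have hmc : 0 < m + c := by nlinarith [h2]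
  have hΛs : m ≤ Λ * s := h1
  have hquad : (Λ * s) ^ 2 + c * (Λ * s) - G ≥ 0 := by nlinarith [h2]
  have hΛsq : Λ ^ 2 ≤ 1 / 2 := by
    nlinarith [Real.sq_sqrt (by norm_num : (2:ℝ) ≥ 0), Real.sqrt_nonneg 2]
  -- c * Λ * s ≥ (1 - Λ²) G ≥ G/2 = s²/2
  have hx : Λ ^ 2 * s ^ 2 ≤ 1 / 2 * s ^ 2 :=
    mul_le_mul_of_nonneg_right hΛsq (sq_nonneg s)
  rw [mul_pow] at hquad
  have key : s ^ 2 / 2 ≤ c * (Λ * s) := by linarith [hquad, hs2, hx]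
  have hcpos : 0 < c := by nlinarith [mul_pos hΛ hs]
  have : s ≤ 2 * c * Λ := by
    rw [← mul_le_mul_iff_of_pos_right hs]
    nlinarith [key]
  calc s ≤ 2 * c * Λ := this
    _ ≤ 2 * (L₁ + α) * Λ := by nlinarith
end

section
/- Let f: ℝ^n × ℝ^m → ℝ be differentiable, μ-strongly concave in y, with ∇f jointly ℓ₁-Lipschitz, and define F(x) = max_y f(x,y). Then F is differentiable with ∇F(x) = ∇_x f(x, y*(x)), and ∇F is L₁-Lipschitz with L₁ = (1 + ℓ₁/μ)ℓ₁. -/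
open Set Asymptotics ContinuousLinearMap

section auxlemmas
variable {Y : Type*} [NormedAddCommGroup Y] [NormedSpace ℝ Y]

variable {Y : Type*} [NormedAddCommGroup Y] [NormedSpace ℝ Y]

lemma concave_le_tangent {g : Y → ℝ} (hg : ConcaveOn ℝ univ g) {y : Y} {G : Y →L[ℝ] ℝ}
    (hd : HasFDerivAt g G y) (z : Y) : g z ≤ g y + G (z - y) := by
  have hline : ∀ t : ℝ, (AffineMap.lineMap y z : ℝ →ᵃ[ℝ] Y) t = y + t • (z - y) := by
    intro t; simp [AffineMap.lineMap_apply]; module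
  have hφconc : ConcaveOn ℝ univ (g ∘ (AffineMap.lineMap y z : ℝ →ᵃ[ℝ] Y)) := by
    simpa using hg.comp_affineMap (AffineMap.lineMap y z)
  have hder : HasDerivAt (g ∘ (AffineMap.lineMap y z : ℝ →ᵃ[ℝ] Y)) (G (z - y)) 0 := by
    have h0 : HasDerivAt (fun t : ℝ => y + t • (z - y)) (z - y) 0 := by
      simpa using ((hasDerivAt_id (0:ℝ)).smul_const (z - y)).const_add y
    have hd0 : HasFDerivAt g G ((AffineMap.lineMap y z : ℝ →ᵃ[ℝ] Y) 0) := by simpa [hline] using hd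
    have := hd0.comp_hasDerivAt (x := (0:ℝ)) (by simpa [hline] using h0 : HasDerivAt (fun t : ℝ => (AffineMap.lineMap y z : ℝ →ᵃ[ℝ] Y) t) (z - y) 0)
    simpa [hline, Function.comp] using this
  have hs := hφconc.slope_le_of_hasDerivAt (mem_univ (0:ℝ)) (mem_univ (1:ℝ)) one_pos hder
  have h01 : slope (g ∘ (AffineMap.lineMap y z : ℝ →ᵃ[ℝ] Y)) 0 1 = g z - g y := by
    simp [slope_def_field, hline, Function.comp]
  rw [h01] at hs
  linarith

lemma concave_monotone {g : Y → ℝ} (hg : ConcaveOn ℝ univ g) {y z : Y} {Gy Gz : Y →L[ℝ] ℝ}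
    (hy : HasFDerivAt g Gy y) (hz : HasFDerivAt g Gz z) :
    Gz (z - y) - Gy (z - y) ≤ 0 := by
  have h1 := concave_le_tangent hg hy z
  have h2 := concave_le_tangent hg hz y
  have : Gz (y - z) = - Gz (z - y) := by rw [← map_neg]; congr 1; abel
  linarith [h1, h2, this]

end auxlemmas

section auxstrong
variable {Y : Type*} [NormedAddCommGroup Y] [InnerProductSpace ℝ Y]

lemma strong_concave_monotone {μ : ℝ} {g : Y → ℝ} (hg : StrongConcaveOn univ μ g)
    {y z : Y} {Gy Gz : Y →L[ℝ] ℝ}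
    (hy : HasFDerivAt g Gy y) (hz : HasFDerivAt g Gz z) :
    Gz (z - y) - Gy (z - y) ≤ -(μ * ‖z - y‖ ^ 2) := by
  have hh : ConcaveOn ℝ univ fun w => g w + μ / 2 * ‖w‖ ^ 2 :=
    (strongConcaveOn_iff_convex.mp hg)
  have hsq : ∀ w : Y, HasFDerivAt (fun w : Y => ‖w‖ ^ 2) (2 • (innerSL ℝ w)) w := by
    intro w
    simpa using (hasFDerivAt_id w).norm_sq
  have hy' : HasFDerivAt (fun w => g w + μ / 2 * ‖w‖ ^ 2)
      (Gy + (μ / 2) • (2 • (innerSL ℝ y))) y := hy.add ((hsq y).const_mul (μ / 2))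
  have hz' : HasFDerivAt (fun w => g w + μ / 2 * ‖w‖ ^ 2)
      (Gz + (μ / 2) • (2 • (innerSL ℝ z))) z := hz.add ((hsq z).const_mul (μ / 2))
  have key := concave_monotone hh hy' hz'
  have hzy : (inner ℝ z (z - y) : ℝ) - inner ℝ y (z - y) = ‖z - y‖ ^ 2 := by
    rw [← inner_sub_left, real_inner_self_eq_norm_sq]
  simp only [ContinuousLinearMap.add_apply, ContinuousLinearMap.smul_apply,
    ContinuousLinearMap.coe_smul', Pi.smul_apply, innerSL_apply_apply, smul_eq_mul, nsmul_eq_mul] at key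
  push_cast at key
  have h2 : μ * ((inner ℝ z (z - y) : ℝ) - inner ℝ y (z - y)) = μ * ‖z - y‖ ^ 2 := by rw [hzy]
  linarith [key, h2]

end auxstrong

theorem value_aux {E Y : Type*} [NormedAddCommGroup E] [InnerProductSpace ℝ E] [CompleteSpace E]
    [NormedAddCommGroup Y] [InnerProductSpace ℝ Y] [CompleteSpace Y]
    (μ ℓ₁ : ℝ) (hμ : 0 < μ) (hℓ : 0 < ℓ₁)
    (f : E × Y → ℝ) (hdiff : Differentiable ℝ f)
    (hconc : ∀ x : E, StrongConcaveOn Set.univ μ fun y => f (x, y))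
    (hlip : ∀ p q : E × Y, ‖fderiv ℝ f p - fderiv ℝ f q‖ ≤ ℓ₁ * ‖p - q‖)
    (ystar : E → Y) (hstar : ∀ x y, f (x, y) ≤ f (x, ystar x)) :
    (∀ x, HasGradientAt (fun x' => f (x', ystar x'))
        (gradient (fun x' => f (x', ystar x)) x) x) ∧
      LipschitzWith (Real.toNNReal ((1 + ℓ₁ / μ) * ℓ₁))
        (fun x => gradient (fun x' => f (x', ystar x)) x) := by
  -- partial derivatives
  have hpx : ∀ (y : Y) (x : E), HasFDerivAt (fun x' => f (x', y))
      ((fderiv ℝ f (x, y)).comp (inl ℝ E Y)) x := by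
    intro y x
    have base : HasFDerivAt (fun x' : E => (x', y)) (inl ℝ E Y) x := by
      have := (inl ℝ E Y).hasFDerivAt (x := x) |>.add_const ((0 : E), y)
      simpa [Prod.mk_add_mk] using this
    exact (hdiff (x, y)).hasFDerivAt.comp x base
  have hpy : ∀ (x : E) (y : Y), HasFDerivAt (fun y' => f (x, y'))
      ((fderiv ℝ f (x, y)).comp (inr ℝ E Y)) y := by
    intro x y
    have base : HasFDerivAt (fun y' : Y => (x, y')) (inr ℝ E Y) y := by
      have := (inr ℝ E Y).hasFDerivAt (x := y) |>.add_const ((x, 0) : E × Y)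
      simpa [Prod.mk_add_mk] using this
    exact (hdiff (x, y)).hasFDerivAt.comp y base
  -- critical point
  have hcrit : ∀ x, (fderiv ℝ f (x, ystar x)).comp (inr ℝ E Y) = 0 := by
    intro x
    have hmax : IsLocalMax (fun y => f (x, y)) (ystar x) :=
      Filter.Eventually.of_forall fun y => hstar x y
    have h0 := hmax.fderiv_eq_zero
    rw [(hpy x (ystar x)).fderiv] at h0
    exact h0
  have hconc' : ∀ x : E, ConcaveOn ℝ univ fun y => f (x, y) := by
    intro x
    exact (hconc x).concaveOn fun r => by positivity
  -- prod norms
  have hnorm1 : ∀ (a : E) (b : Y), ‖((a, (0:Y)) : E × Y)‖ = ‖a‖ ∧ ‖(((0:E), b) : E × Y)‖ = ‖b‖ := by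
    intro a b
    constructor <;> simp [Prod.norm_def]
  -- ystar Lipschitz
  have hyl : ∀ x x' : E, ‖ystar x' - ystar x‖ ≤ ℓ₁ / μ * ‖x' - x‖ := by
    intro x x'
    set Δ := ystar x' - ystar x with hΔ
    have h1 := strong_concave_monotone (hconc x) (hpy x (ystar x)) (hpy x (ystar x'))
    rw [← hΔ] at h1
    have e0 : ((fderiv ℝ f (x, ystar x)).comp (inr ℝ E Y)) Δ = 0 := by
      rw [hcrit x]; rfl
    have e1 : ((fderiv ℝ f (x, ystar x')).comp (inr ℝ E Y)) Δ
        = (fderiv ℝ f (x, ystar x') - fderiv ℝ f (x', ystar x')) ((0 : E), Δ) := by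
      have := congrFun (congrArg DFunLike.coe (hcrit x')) Δ
      simp only [comp_apply, inr_apply] at this ⊢
      simp only [ContinuousLinearMap.sub_apply]
      simp only [ContinuousLinearMap.zero_apply] at this
      rw [this]; ring
    have hb : |(fderiv ℝ f (x, ystar x') - fderiv ℝ f (x', ystar x')) ((0 : E), Δ)|
        ≤ ℓ₁ * ‖x' - x‖ * ‖Δ‖ := by
      calc |(fderiv ℝ f (x, ystar x') - fderiv ℝ f (x', ystar x')) ((0 : E), Δ)|
          ≤ ‖fderiv ℝ f (x, ystar x') - fderiv ℝ f (x', ystar x')‖ * ‖(((0:E), Δ) : E × Y)‖ :=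
            (fderiv ℝ f (x, ystar x') - fderiv ℝ f (x', ystar x')).le_opNorm _
        _ ≤ (ℓ₁ * ‖((x, ystar x') - (x', ystar x') : E × Y)‖) * ‖Δ‖ := by
            rw [(hnorm1 0 Δ).2]
            exact mul_le_mul_of_nonneg_right (hlip _ _) (norm_nonneg _)
        _ = ℓ₁ * ‖x - x'‖ * ‖Δ‖ := by
            rw [show ((x, ystar x') - (x', ystar x') : E × Y) = ((x - x', 0) : E × Y) by
              simp [Prod.mk_sub_mk]]
            rw [(hnorm1 (x - x') 0).1]
        _ = ℓ₁ * ‖x' - x‖ * ‖Δ‖ := by rw [norm_sub_rev]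
    have hkey : μ * ‖Δ‖ ^ 2 ≤ ℓ₁ * ‖x' - x‖ * ‖Δ‖ := by
      have := neg_abs_le ((fderiv ℝ f (x, ystar x') - fderiv ℝ f (x', ystar x')) ((0 : E), Δ))
      nlinarith [h1, hb, e0, e1, this]
    rcases eq_or_lt_of_le (norm_nonneg Δ) with h0 | h0
    · rw [← h0]; positivity
    · rw [div_mul_eq_mul_div, le_div_iff₀ hμ]
      calc ‖Δ‖ * μ = μ * ‖Δ‖ := by ring
        _ ≤ ℓ₁ * ‖x' - x‖ := by
            have := hkey
            rw [pow_two] at this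
            nlinarith
  -- gradient identification
  have hG : ∀ x : E, (InnerProductSpace.toDual ℝ E) (gradient (fun x' => f (x', ystar x)) x)
      = (fderiv ℝ f (x, ystar x)).comp (inl ℝ E Y) := by
    intro x
    have h1 : HasGradientAt (fun x' => f (x', ystar x))
        (gradient (fun x' => f (x', ystar x)) x) x :=
      ((hpx (ystar x) x).differentiableAt).hasGradientAt
    have h2 := hasGradientAt_iff_hasFDerivAt.mp h1
    exact h2.unique (hpx (ystar x) x)
  constructor
  · intro x
    rw [hasGradientAt_iff_hasFDerivAt, hG x]
    set L := (fderiv ℝ f (x, ystar x)).comp (inl ℝ E Y) with hL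
    rw [hasFDerivAt_iff_isLittleO_nhds_zero]
    have hCpos : 0 ≤ ℓ₁ * (ℓ₁ / μ) := by positivity
    set C := ℓ₁ * (ℓ₁ / μ) with hC
    have hupper : ∀ x' : E, f (x', ystar x') - f (x, ystar x) - L (x' - x)
        ≤ (f (x', ystar x) - f (x, ystar x) - L (x' - x)) + C * ‖x' - x‖ ^ 2 := by
      intro x'
      have htan := concave_le_tangent (hconc' x') (hpy x' (ystar x)) (ystar x')
      have e1 : ((fderiv ℝ f (x', ystar x)).comp (inr ℝ E Y)) (ystar x' - ystar x)
          = (fderiv ℝ f (x', ystar x) - fderiv ℝ f (x, ystar x)) ((0:E), ystar x' - ystar x) := by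
        have h0 := congrFun (congrArg DFunLike.coe (hcrit x)) (ystar x' - ystar x)
        simp only [comp_apply, inr_apply, ContinuousLinearMap.zero_apply] at h0
        simp only [ContinuousLinearMap.sub_apply, comp_apply, inr_apply]
        rw [h0]; ring
      have hb : |(fderiv ℝ f (x', ystar x) - fderiv ℝ f (x, ystar x)) ((0:E), ystar x' - ystar x)|
          ≤ C * ‖x' - x‖ ^ 2 := by
        calc |(fderiv ℝ f (x', ystar x) - fderiv ℝ f (x, ystar x)) ((0:E), ystar x' - ystar x)|
            ≤ ‖fderiv ℝ f (x', ystar x) - fderiv ℝ f (x, ystar x)‖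
              * ‖(((0:E), ystar x' - ystar x) : E × Y)‖ :=
              (fderiv ℝ f (x', ystar x) - fderiv ℝ f (x, ystar x)).le_opNorm _
          _ ≤ (ℓ₁ * ‖((x', ystar x) - (x, ystar x) : E × Y)‖) * ‖ystar x' - ystar x‖ := by
              rw [(hnorm1 0 (ystar x' - ystar x)).2]
              exact mul_le_mul_of_nonneg_right (hlip _ _) (norm_nonneg _)
          _ = ℓ₁ * ‖x' - x‖ * ‖ystar x' - ystar x‖ := by
              rw [show ((x', ystar x) - (x, ystar x) : E × Y) = ((x' - x, 0) : E × Y) by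
                simp [Prod.mk_sub_mk]]
              rw [(hnorm1 (x' - x) 0).1]
          _ ≤ ℓ₁ * ‖x' - x‖ * (ℓ₁ / μ * ‖x' - x‖) :=
              mul_le_mul_of_nonneg_left (hyl x x') (by positivity)
          _ = C * ‖x' - x‖ ^ 2 := by rw [hC]; ring
      have habs := le_abs_self
        ((fderiv ℝ f (x', ystar x) - fderiv ℝ f (x, ystar x)) ((0:E), ystar x' - ystar x))
      rw [e1] at htan
      linarith
    have hlow : ∀ x' : E, f (x', ystar x) - f (x, ystar x) - L (x' - x)
        ≤ f (x', ystar x') - f (x, ystar x) - L (x' - x) := by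
      intro x'
      have := hstar x' (ystar x)
      linarith
    have h1 : (fun h : E => f (x + h, ystar x) - f (x, ystar x) - L h)
        =o[nhds 0] fun h => h :=
      hasFDerivAt_iff_isLittleO_nhds_zero.mp (hpx (ystar x) x)
    have h2 : (fun h : E => C * ‖h‖ ^ 2) =o[nhds 0] fun h => h := by
      have ha : Filter.Tendsto (fun h : E => C * ‖h‖) (nhds 0) (nhds 0) := by
        simpa using (continuous_norm.tendsto (0 : E)).const_mul C
      have hb := (Asymptotics.isLittleO_one_iff ℝ).mpr ha
      have hc := hb.mul_isBigO (isBigO_refl (fun h : E => ‖h‖) (nhds 0))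
      have hc' : (fun h : E => C * ‖h‖ ^ 2) =o[nhds (0:E)] fun h : E => ‖h‖ := by
        simpa [pow_two, mul_assoc] using hc
      have hd : (fun h : E => ‖h‖) =O[nhds (0:E)] fun h => h :=
        isBigO_norm_left.mpr (isBigO_refl _ _)
      exact hc'.trans_isBigO hd
    have h3 := h1.norm_left.add h2
    refine Asymptotics.IsBigO.trans_isLittleO ?_ h3
    refine isBigO_of_le _ fun h => ?_
    have hu := hupper (x + h)
    have hl := hlow (x + h)
    simp only [add_sub_cancel_left] at hu hl
    set x' := x + h with hx'
    have hnn : (0:ℝ) ≤ ‖f (x', ystar x) - f (x, ystar x) - L h‖ + C * ‖h‖ ^ 2 := by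
      positivity
    rw [Real.norm_eq_abs (‖_‖ + _), abs_of_nonneg hnn, Real.norm_eq_abs, abs_le,
      Real.norm_eq_abs]
    constructor
    · have := neg_abs_le (f (x', ystar x) - f (x, ystar x) - L h)
      have hC2 : 0 ≤ C * ‖h‖ ^ 2 := by positivity
      linarith
    · have := le_abs_self (f (x', ystar x) - f (x, ystar x) - L h)
      linarith
  · have hK : 0 ≤ (1 + ℓ₁ / μ) * ℓ₁ := by positivity
    refine LipschitzWith.of_dist_le_mul fun x x' => ?_
    rw [dist_eq_norm, dist_eq_norm, Real.coe_toNNReal _ hK]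
    have hiso : ‖gradient (fun y' => f (y', ystar x)) x - gradient (fun y' => f (y', ystar x')) x'‖
        = ‖(fderiv ℝ f (x, ystar x)).comp (inl ℝ E Y)
            - (fderiv ℝ f (x', ystar x')).comp (inl ℝ E Y)‖ := by
      rw [← hG x, ← hG x', ← map_sub]
      exact ((InnerProductSpace.toDual ℝ E).norm_map _).symm
    rw [hiso]
    have hop : ‖(fderiv ℝ f (x, ystar x)).comp (inl ℝ E Y)
          - (fderiv ℝ f (x', ystar x')).comp (inl ℝ E Y)‖
        ≤ ℓ₁ * ‖((x, ystar x) - (x', ystar x') : E × Y)‖ := by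
      rw [← ContinuousLinearMap.sub_comp]
      refine ContinuousLinearMap.opNorm_le_bound _ (by positivity) fun v => ?_
      rw [ContinuousLinearMap.comp_apply, inl_apply]
      calc ‖(fderiv ℝ f (x, ystar x) - fderiv ℝ f (x', ystar x')) ((v, 0) : E × Y)‖
          ≤ ‖fderiv ℝ f (x, ystar x) - fderiv ℝ f (x', ystar x')‖ * ‖((v, (0:Y)) : E × Y)‖ :=
            (fderiv ℝ f (x, ystar x) - fderiv ℝ f (x', ystar x')).le_opNorm _
        _ ≤ ℓ₁ * ‖((x, ystar x) - (x', ystar x') : E × Y)‖ * ‖v‖ := by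
            rw [(hnorm1 v 0).1]
            exact mul_le_mul_of_nonneg_right (hlip _ _) (norm_nonneg _)
    have hpp : ‖((x, ystar x) - (x', ystar x') : E × Y)‖ ≤ (1 + ℓ₁ / μ) * ‖x - x'‖ := by
      have h2 : ‖ystar x - ystar x'‖ ≤ ℓ₁ / μ * ‖x - x'‖ := hyl x' x
      have hfac : 0 ≤ ℓ₁ / μ := by positivity
      have h1 : ‖x - x'‖ ≤ (1 + ℓ₁ / μ) * ‖x - x'‖ := by nlinarith [norm_nonneg (x - x')]
      have h2' : ‖ystar x - ystar x'‖ ≤ (1 + ℓ₁ / μ) * ‖x - x'‖ := by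
        nlinarith [norm_nonneg (x - x')]
      rw [show ((x, ystar x) - (x', ystar x') : E × Y)
          = ((x - x', ystar x - ystar x') : E × Y) by simp [Prod.mk_sub_mk]]
      rw [Prod.norm_def]
      exact max_le h1 h2'
    calc ‖(fderiv ℝ f (x, ystar x)).comp (inl ℝ E Y)
          - (fderiv ℝ f (x', ystar x')).comp (inl ℝ E Y)‖
        ≤ ℓ₁ * ‖((x, ystar x) - (x', ystar x') : E × Y)‖ := hop
      _ ≤ ℓ₁ * ((1 + ℓ₁ / μ) * ‖x - x'‖) := mul_le_mul_of_nonneg_left hpp hℓ.le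
      _ = (1 + ℓ₁ / μ) * ℓ₁ * ‖x - x'‖ := by ring

/-- Danskin-type result: `F(x) = max_y f(x,y)` is differentiable with
`∇F(x) = ∇ₓ f(x, y*(x))`, and `∇F` is `L₁ = (1 + ℓ₁/μ)ℓ₁`-Lipschitz. -/
theorem value_function_gradient_lipschitz
    {n m : ℕ} (μ ℓ₁ : ℝ) (hμ : 0 < μ) (hℓ : 0 < ℓ₁)
    (f : EuclideanSpace ℝ (Fin n) × EuclideanSpace ℝ (Fin m) → ℝ)
    (hdiff : Differentiable ℝ f)
    (hconc : ∀ x : EuclideanSpace ℝ (Fin n),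
      StrongConcaveOn Set.univ μ fun y => f (x, y))
    (hlip : ∀ p q : EuclideanSpace ℝ (Fin n) × EuclideanSpace ℝ (Fin m),
      ‖fderiv ℝ f p - fderiv ℝ f q‖ ≤ ℓ₁ * ‖p - q‖)
    (ystar : EuclideanSpace ℝ (Fin n) → EuclideanSpace ℝ (Fin m))
    (hstar : ∀ x y, f (x, y) ≤ f (x, ystar x)) :
    (∀ x, HasGradientAt (fun x' => f (x', ystar x'))
        (gradient (fun x' => f (x', ystar x)) x) x) ∧
      LipschitzWith (Real.toNNReal ((1 + ℓ₁ / μ) * ℓ₁))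
        (fun x => gradient (fun x' => f (x', ystar x)) x) :=
  value_aux μ ℓ₁ hμ hℓ f hdiff hconc hlip ystar hstar
end

section
/- Let H be symmetric, g ∈ ℝ^n, α > 0, Λ ∈ (0, √2/2], and τ ∈ (0, 1]. Let s ∈ ℝ^n satisfy s^T H s = -g^T s - δ‖s‖² and g^T s = α - δ ≤ 0 for some δ ≥ α, with τ‖s‖ = Λ. Then E := τ g^T s + (τ²/2) s^T H s ≤ -αΛ²/2. -/
open Matrix

/-- Descent estimate in the case `ω ≤ |v| ≤ 1/√(1+Λ²)`:
if `sᵀHs = -gᵀs - δ‖s‖²`, `gᵀs = α - δ ≤ 0`, `δ ≥ α > 0`, `τ ∈ (0,1]`,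
`τ‖s‖ = Λ ∈ (0, √2/2]`, then `E = τ gᵀs + (τ²/2) sᵀHs ≤ -αΛ²/2`. -/
theorem hsda_descent_estimate_moderate_v
    {n : ℕ} (H : Matrix (Fin n) (Fin n) ℝ) (hHsymm : H.IsSymm)
    (g s : Fin n → ℝ) (α δ Λ τ : ℝ)
    (hα : 0 < α) (hδ : α ≤ δ)
    (hΛ : 0 < Λ) (hΛ2 : Λ ≤ Real.sqrt 2 / 2)
    (hτ : 0 < τ) (hτ1 : τ ≤ 1)
    (hsHs : s ⬝ᵥ H.mulVec s = -(g ⬝ᵥ s) - δ * (s ⬝ᵥ s))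
    (hgs : g ⬝ᵥ s = α - δ) (hgs0 : g ⬝ᵥ s ≤ 0)
    (hτs : τ * Real.sqrt (s ⬝ᵥ s) = Λ) :
    τ * (g ⬝ᵥ s) + τ ^ 2 / 2 * (s ⬝ᵥ H.mulVec s) ≤ -(α * Λ ^ 2) / 2 := by
  have hss : 0 ≤ s ⬝ᵥ s := by
    simpa [dotProduct] using Finset.sum_nonneg fun i _ => mul_self_nonneg (s i)
  have hsq : Real.sqrt (s ⬝ᵥ s) ^ 2 = s ⬝ᵥ s := Real.sq_sqrt hss
  have hL2 : τ ^ 2 * (s ⬝ᵥ s) = Λ ^ 2 := by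
    rw [← hsq, ← hτs]; ring
  rw [hsHs]
  nlinarith [mul_nonneg (mul_nonneg hτ.le (sub_nonneg.2 hτ1)) (neg_nonneg.2 hgs0),
    mul_nonneg (sub_nonneg.2 hδ) (sq_nonneg Λ)]
end

section
/- Let H be symmetric, g ∈ ℝ^n, α > 0, δ ≥ α, s ∈ ℝ^n, v ∈ ℝ with |v| < 1, and suppose (H + δI)(vs) = -v g (i.e., Hs = -δs - g when s is suitably scaled) together with g^T s = |v|(α - δ) and s^T H s = -δ‖s‖² - v²(α-δ). For τ ∈ (0,1] with τ‖s‖ = Λ, we have E := τ g^T s + (τ²/2)s^T H s ≤ -αΛ²/2. -/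
open Matrix

/-- Descent estimate in the negative-curvature case `|v| < 1`:
if `(H + δI)(v s) = -v g`, `gᵀs = |v|(α - δ)`, `sᵀHs = -δ‖s‖² - v²(α - δ)`,
`δ ≥ α > 0`, `τ ∈ (0,1]`, `τ‖s‖ = Λ`, then `E = τ gᵀs + (τ²/2) sᵀHs ≤ -αΛ²/2`. -/
theorem hsda_descent_estimate_small_v
    {n : ℕ} (H : Matrix (Fin n) (Fin n) ℝ) (hHsymm : H.IsSymm)
    (g s : Fin n → ℝ) (α δ Λ τ v : ℝ)
    (hα : 0 < α) (hδ : α ≤ δ) (hv : |v| < 1)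
    (hτ : 0 < τ) (hτ1 : τ ≤ 1)
    (heig : H.mulVec (v • s) + δ • (v • s) = (-v) • g)
    (hgs : g ⬝ᵥ s = |v| * (α - δ))
    (hsHs : s ⬝ᵥ H.mulVec s = -δ * (s ⬝ᵥ s) - v ^ 2 * (α - δ))
    (hτs : τ * Real.sqrt (s ⬝ᵥ s) = Λ) :
    τ * (g ⬝ᵥ s) + τ ^ 2 / 2 * (s ⬝ᵥ H.mulVec s) ≤ -(α * Λ ^ 2) / 2 := by
  have hss : 0 ≤ s ⬝ᵥ s := by
    simpa [dotProduct] using Finset.sum_nonneg fun i _ => mul_self_nonneg (s i)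
  have hΛ2 : Λ ^ 2 = τ ^ 2 * (s ⬝ᵥ s) := by
    rw [← hτs]; rw [mul_pow, Real.sq_sqrt hss]
  have hvv : v ^ 2 ≤ |v| := by
    nlinarith [abs_nonneg v, sq_abs v]
  rw [hgs, hsHs, hΛ2]
  have h1 : 0 ≤ τ * |v| - τ ^ 2 * v ^ 2 / 2 := by
    nlinarith [abs_nonneg v, sq_nonneg v, mul_le_of_le_one_left (abs_nonneg v) hτ1]
  nlinarith [mul_nonneg (sub_nonneg.2 hδ) h1,
    mul_nonneg (mul_nonneg (sub_nonneg.2 hδ) (sq_nonneg τ)) hss]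
end

section
/- Let ζ, α ∈ ℝ with ζ ≥ α > 0, ρ ∈ ℝ, ω ∈ (1/4, 1/2), τ ∈ (0,1], v ∈ ℝ with |v| ≥ ω, and s ∈ ℝ^n with τ‖s‖ = Λ. Suppose g^T s = -ζ + α + ρ/v and s^T H s + g^T s = -ζ‖s‖² + κ, where κ = -ρ/v. Then E := τ g^T s + (τ²/2) s^T H s ≤ 4|ρ| - (ζ/2)Λ². -/
open Matrix

/-- Inexact Ritz-pair descent estimate: with `ζ ≥ α > 0`,
`ω ∈ (1/4, 1/2)`, `τ ∈ (0,1]`, `|v| ≥ ω`, `τ‖s‖ = Λ`,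
`gᵀs = -ζ + α + ρ/v` and `sᵀHs + gᵀs = -ζ‖s‖² + κ` with `κ = -ρ/v`, we have
`E = τ gᵀs + (τ²/2) sᵀHs ≤ 4|ρ| - (ζ/2)Λ²`. -/
theorem ihsda_descent_estimate
    {n : ℕ} (H : Matrix (Fin n) (Fin n) ℝ) (hHsymm : H.IsSymm)
    (g s : Fin n → ℝ) (ζ α ρ ω τ v Λ κ : ℝ)
    (hζα : α ≤ ζ) (hα : 0 < α)
    (hω : 1 / 4 < ω) (hω' : ω < 1 / 2)
    (hτ : 0 < τ) (hτ1 : τ ≤ 1)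
    (hv : ω ≤ |v|)
    (hτs : τ * Real.sqrt (s ⬝ᵥ s) = Λ)
    (hgs : g ⬝ᵥ s = -ζ + α + ρ / v)
    (hκ : κ = -(ρ / v))
    (hsHs : s ⬝ᵥ H.mulVec s + g ⬝ᵥ s = -ζ * (s ⬝ᵥ s) + κ) :
    τ * (g ⬝ᵥ s) + τ ^ 2 / 2 * (s ⬝ᵥ H.mulVec s) ≤ 4 * |ρ| - ζ / 2 * Λ ^ 2 := by
  have hss : (0:ℝ) ≤ s ⬝ᵥ s := by
    unfold dotProduct
    exact Finset.sum_nonneg fun i _ => mul_self_nonneg _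
  have hΛ : Λ ^ 2 = τ ^ 2 * (s ⬝ᵥ s) := by
    rw [← hτs, mul_pow, Real.sq_sqrt hss]
  have hHs : s ⬝ᵥ H.mulVec s = -ζ * (s ⬝ᵥ s) + κ - (g ⬝ᵥ s) := by linarith
  set x : ℝ := ρ / v with hx
  have hxabs : |x| ≤ 4 * |ρ| := by
    have hv0 : (0:ℝ) < |v| := lt_of_lt_of_le (by linarith) hv
    rw [hx, abs_div]
    rw [div_le_iff₀ hv0]
    calc |ρ| = 4 * |ρ| * (1/4) := by ring
    _ ≤ 4 * |ρ| * |v| := by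
        apply mul_le_mul_of_nonneg_left (by linarith) (by positivity)
  have h1 : x ≤ |x| := le_abs_self x
  have h2 : -x ≤ |x| := neg_le_abs x
  have hτ' : 0 ≤ τ * (1 - τ) := mul_nonneg hτ.le (by linarith)
  rw [hHs, hgs, hκ, hΛ]
  nlinarith [mul_nonneg hτ' (sub_nonneg.2 h1), mul_nonneg hτ' (sub_nonneg.2 h2),
    sq_nonneg (2*τ - 1), abs_nonneg x, abs_nonneg ρ,
    mul_nonneg (mul_nonneg hτ.le (by linarith : (0:ℝ) ≤ 2 - τ)) (sub_nonneg.2 hζα)]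
end
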